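/- arXiv:2006.16119 — 2 statements merged into one kernel-verified Lean document; each statement's English description precedes it below -/
import Mathlib

section
/- Let m1 ≥ m2 be positive integers and q > 1 with q − 1 > m1. If t ∈ Γ_{q,m1} − Γ_{q,m2} (i.e., t = x − y for some x ∈ Γ_{q,m1}, y ∈ Γ_{q,m2}), then Γ_{q,m1} ∩ (Γ_{q,m2} + t) equals the union, over all expansions (t_i) ∈ {−m2,...,m1}^ℕ of t in base q, of the sets {Σ_{i=1}^∞ c_i/q^i : c_i ∈ {0,...,m1} ∩ ({0,...,m2} + t_i) for all i}. -/
/-! Subtract digit by digit: if `x = ∑ cᵢ/qⁱ` and `x - t = ∑ bᵢ/qⁱ` with `cᵢ ∈ {0,…,m1}`,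
`bᵢ ∈ {0,…,m2}`, then `tᵢ = cᵢ - bᵢ` expands `t` and `cᵢ ∈ {0,…,m2} + tᵢ`; conversely the digits
`cᵢ - tᵢ ∈ {0,…,m2}` expand `x - t`. Since all digit sequences are bounded and `q > 1`, the series
converge and may be subtracted termwise. -/

open scoped ENNReal

/-- `Gamma q m` is the set of sums `∑ cᵢ/qⁱ` with digits `cᵢ ∈ {0,…,m}`. -/
noncomputable def Gamma (q : ℝ) (m : ℕ) : Set ℝ :=
  {x | ∃ c : ℕ → ℕ, (∀ i, c i ≤ m) ∧ x = ∑' i : ℕ, (c i : ℝ) / q ^ (i + 1)}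

/-- `(a i)` is an expansion of `t` in base `q` over the alphabet `{-m2,…,m1}`. -/
def IsExpansion (q : ℝ) (m1 m2 : ℕ) (a : ℕ → ℤ) (t : ℝ) : Prop :=
  (∀ i, -(m2 : ℤ) ≤ a i ∧ a i ≤ (m1 : ℤ)) ∧ t = ∑' i : ℕ, (a i : ℝ) / q ^ (i + 1)

/-- `U_{m1,m2}(q)`: reals with a unique expansion over `{-m2,…,m1}`. -/
def uniqSet (q : ℝ) (m1 m2 : ℕ) : Set ℝ :=
  {t | ∃! a : ℕ → ℤ, IsExpansion q m1 m2 a t}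

/-- `D_{m1,m2}(q)`: the set of Hausdorff dimensions of `Γ_{q,m1} ∩ (Γ_{q,m2} + t)`
for `t ∈ U_{m1,m2}(q)`. -/
noncomputable def dimSet (q : ℝ) (m1 m2 : ℕ) : Set ℝ≥0∞ :=
  {d | ∃ t ∈ uniqSet q m1 m2,
    dimH (Gamma q m1 ∩ ((fun x => x + t) '' Gamma q m2)) = d}

lemma summable_div_pow_succ {q : ℝ} (hq : 1 < q) {b : ℕ → ℝ} {M : ℝ} (hb : ∀ i, |b i| ≤ M) :
    Summable fun i => b i / q ^ (i + 1) := by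
  have hq0 : 0 < q := one_pos.trans hq
  have hgeom : Summable fun i : ℕ => M * q⁻¹ ^ (i + 1) :=
    ((summable_nat_add_iff 1).mpr
      (summable_geometric_of_lt_one (by positivity) (inv_lt_one_of_one_lt₀ hq))).mul_left M
  refine hgeom.of_norm_bounded fun i => ?_
  rw [Real.norm_eq_abs, abs_div, abs_of_pos (pow_pos hq0 _), inv_pow, ← div_eq_mul_inv]
  gcongr
  exact hb i

lemma tsum_intCast_sub_div_pow_succ {q : ℝ} (hq : 1 < q) {a b : ℕ → ℤ} {M : ℤ}
    (ha : ∀ i, |a i| ≤ M) (hb : ∀ i, |b i| ≤ M) :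
    ∑' i, ((a i - b i : ℤ) : ℝ) / q ^ (i + 1) =
      ∑' i, (a i : ℝ) / q ^ (i + 1) - ∑' i, (b i : ℝ) / q ^ (i + 1) := by
  have hsum : ∀ c : ℕ → ℤ, (∀ i, |c i| ≤ M) → Summable fun i => (c i : ℝ) / q ^ (i + 1) :=
    fun c hc => summable_div_pow_succ hq (M := M) fun i => by exact_mod_cast hc i
  rw [← (hsum a ha).tsum_sub (hsum b hb)]
  congr 1 with i
  push_cast
  ring

lemma mem_Gamma_iff_exists_int {q : ℝ} {m : ℕ} {x : ℝ} :
    x ∈ Gamma q m ↔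
      ∃ c : ℕ → ℤ, (∀ i, 0 ≤ c i ∧ c i ≤ m) ∧ x = ∑' i, (c i : ℝ) / q ^ (i + 1) := by
  constructor
  · rintro ⟨c, hc, rfl⟩
    exact ⟨fun i => c i, fun i => ⟨Int.natCast_nonneg _, Int.ofNat_le.mpr (hc i)⟩, by simp⟩
  · rintro ⟨c, hc, rfl⟩
    refine ⟨fun i => (c i).toNat, fun i => Int.toNat_le.mpr (hc i).2, ?_⟩
    congr 1 with i
    rw [← Int.cast_natCast, Int.toNat_of_nonneg (hc i).1]

theorem stmt13_general (m1 m2 : ℕ) (q : ℝ)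
    (hq : (m1 : ℝ) < q - 1) (t : ℝ) :
    Gamma q m1 ∩ ((fun x => x + t) '' Gamma q m2) =
      ⋃ a ∈ {a : ℕ → ℤ | IsExpansion q m1 m2 a t},
        {x | ∃ c : ℕ → ℤ,
          (∀ i, 0 ≤ c i ∧ c i ≤ (m1 : ℤ) ∧ a i ≤ c i ∧ c i ≤ a i + (m2 : ℤ)) ∧
          x = ∑' i : ℕ, (c i : ℝ) / q ^ (i + 1)} := by
  have hq1 : 1 < q := by linarith [(Nat.cast_nonneg m1 : (0 : ℝ) ≤ m1)]
  ext x
  simp only [Set.image_add_right, Set.mem_inter_iff, Set.mem_preimage, ← sub_eq_add_neg,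
    mem_Gamma_iff_exists_int, IsExpansion, Set.mem_iUnion, Set.mem_ofPred_eq, exists_prop]
  constructor
  · rintro ⟨⟨c, hc, hx⟩, b, hb, hxt⟩
    have hdiff := tsum_intCast_sub_div_pow_succ hq1 (a := c) (b := b) (M := m1 + m2)
      (fun i => abs_le.mpr (by have := hc i; omega))
      (fun i => abs_le.mpr (by have := hb i; omega))
    refine ⟨fun i => c i - b i, ⟨fun i => ?_, ?_⟩, c, fun i => ?_, hx⟩
    · have := hc i; have := hb i; dsimp only; omega
    · rw [hdiff, ← hx, ← hxt]
      ring
    · have := hc i; have := hb i; dsimp only; omega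
  · rintro ⟨a, ⟨ha, ht⟩, c, hc, hx⟩
    have hdiff := tsum_intCast_sub_div_pow_succ hq1 (a := c) (b := a) (M := m1 + m2)
      (fun i => abs_le.mpr (by have := hc i; omega))
      (fun i => abs_le.mpr (by have := ha i; omega))
    refine ⟨⟨c, fun i => ?_, hx⟩, fun i => c i - a i, fun i => ?_, by rw [hdiff, ← hx, ← ht]⟩
    · have := hc i; omega
    · have := hc i; dsimp only; omega

theorem stmt13 (m1 m2 : ℕ) (hm2 : 1 ≤ m2) (hm : m2 ≤ m1) (q : ℝ)
    (hq : (m1 : ℝ) < q - 1) (t : ℝ)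
    (ht : ∃ x ∈ Gamma q m1, ∃ y ∈ Gamma q m2, t = x - y) :
    Gamma q m1 ∩ ((fun x => x + t) '' Gamma q m2) =
      ⋃ a ∈ {a : ℕ → ℤ | IsExpansion q m1 m2 a t},
        {x | ∃ c : ℕ → ℤ,
          (∀ i, 0 ≤ c i ∧ c i ≤ (m1 : ℤ) ∧ a i ≤ c i ∧ c i ≤ a i + (m2 : ℤ)) ∧
          x = ∑' i : ℕ, (c i : ℝ) / q ^ (i + 1)} :=
  stmt13_general m1 m2 q hq t
end

section
/- Let m1 ≥ m2 be positive integers with m1 + m2 even, set μ := (m1−m2)/2, and let λ_i := μ + τ_i − τ_{i−1} for i ≥ 1, where (τ_i) is the Thue–Morse sequence. For n ≥ 1 define the words a_n := μ λ_1⋯λ_{2^n−1} and b_n := (μ−1) λ_1⋯λ_{2^n−1} over the alphabet {μ−1, μ, μ+1}, with reflection w̄ replacing each letter c by 2μ − c, and set w_1 := b_n ā_n b̄_n a_n and w_2 := ā_n a_n. Then: (i) d_2^*(w_1) < d_2^*(w_2), where d_2^*(w) is the fraction of letters of w equal to μ; and (ii) for every real number d ∈ [d_2^*(w_1), d_2^*(w_2)]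 there exists an infinite sequence (t_i) obtained by concatenating blocks from {w_1, w_2} such that for each j ∈ {μ−1, μ, μ+1} the density lim_{n→∞} #{1 ≤ i ≤ n : t_i = j}/n exists, and the density of the letter μ in (t_i) equals d. -/
/-!
For (i): `b_n` differs from `a_n` only in its first letter and reflection fixes `μ`, so `w₁` is
twice as long as `w₂` and contains exactly two letters `μ` fewer than two copies of `w₂`.

For (ii), build the sequence greedily: append `w₂` while the excess `#μ - d · length` of the word
built so far is nonpositive, and `w₁` otherwise. Since `d ∈ [d₂*(w₁), d₂*(w₂)]`, the block `w₁` has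
nonpositive and `w₂` nonnegative excess, so the excess stays between them; as the blocks have
bounded length, this holds for every prefix and `μ` has density `d`. Every letter of `w₁` and
`w₂` is one of `μ - 1, μ, μ + 1` (as `τ` is `{0,1}`-valued), and both words are invariant under
the reflection, which swaps `μ - 1` and `μ + 1`; hence `2 #(μ ± 1) + #μ = length` on every prefix,
and `μ ± 1` both have density `(1 - d) / 2`.
-/

/-- `d₂*(w)`: the fraction of letters of the word `w` equal to `μ`. -/
noncomputable def d2star (μ : ℤ) (w : List ℤ) : ℝ := (w.count μ : ℝ) / w.length

/-- Reflection of a word over `{μ-1, μ, μ+1}`: each letter `c` is replaced by `2μ - c`. -/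
def reflectZ (μ : ℤ) (w : List ℤ) : List ℤ := w.map (fun c => 2 * μ - c)

/-- The word `a_n = μ λ_1 ⋯ λ_{2^n - 1}`. -/
def wordA (μ : ℤ) (lam : ℕ → ℤ) (n : ℕ) : List ℤ :=
  μ :: (List.range (2 ^ n - 1)).map (fun i => lam (i + 1))

/-- The word `b_n = (μ-1) λ_1 ⋯ λ_{2^n - 1}`. -/
def wordB (μ : ℤ) (lam : ℕ → ℤ) (n : ℕ) : List ℤ :=
  (μ - 1) :: (List.range (2 ^ n - 1)).map (fun i => lam (i + 1))

/-- `w_1 = b_n ā_n b̄_n a_n`. -/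
def wordW1 (μ : ℤ) (lam : ℕ → ℤ) (n : ℕ) : List ℤ :=
  wordB μ lam n ++ reflectZ μ (wordA μ lam n) ++ reflectZ μ (wordB μ lam n) ++ wordA μ lam n

/-- `w_2 = ā_n a_n`. -/
def wordW2 (μ : ℤ) (lam : ℕ → ℤ) (n : ℕ) : List ℤ :=
  reflectZ μ (wordA μ lam n) ++ wordA μ lam n

/-- `concatOf b i` is the `i`-th letter (i = 0,1,2,…) of the infinite concatenation of the
(nonempty) blocks `b 0, b 1, …`. -/
def concatOf (b : ℕ → List ℤ) (i : ℕ) : ℤ :=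
  (((List.range (i + 1)).map b).flatten).getD i 0

open Filter Topology

section Blocks

variable {α : Type*}

def blockPrefix (b : ℕ → List α) (k : ℕ) : List α := ((List.range k).map b).flatten

lemma blockPrefix_succ (b : ℕ → List α) (k : ℕ) :
    blockPrefix b (k + 1) = blockPrefix b k ++ b k := by
  simp [blockPrefix, List.range_succ]

lemma blockPrefix_isPrefix (b : ℕ → List α) {k m : ℕ} (h : k ≤ m) :
    blockPrefix b k <+: blockPrefix b m := by
  induction h with
  | refl => exact List.prefix_rfl
  | step _ ih => exact ih.trans (blockPrefix_succ b _ ▸ List.prefix_append _ _)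

lemma le_length_blockPrefix {b : ℕ → List α} (hb : ∀ k, b k ≠ []) (k : ℕ) :
    k ≤ (blockPrefix b k).length := by
  induction k with
  | zero => simp [blockPrefix]
  | succ k ih =>
    have := List.length_pos_iff.mpr (hb k)
    rw [blockPrefix_succ, List.length_append]
    omega

variable [DecidableEq α]

lemma card_filter_getD_eq_count_take (l : List α) (x a : α) {N : ℕ}
    (hN : N ≤ l.length) :
    ((Finset.range N).filter (fun i => l.getD i x = a)).card = (l.take N).count a := by
  induction N with
  | zero => simp
  | succ N ih =>
    have hlt : N < l.length := hN
    rw [Finset.range_add_one, Finset.filter_insert, List.take_add_one,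
      List.getElem?_eq_getElem hlt, List.getD_eq_getElem _ _ hlt, List.count_append,
      ← ih hlt.le]
    by_cases h : l[N] = a
    · simp [h, Finset.card_insert_of_notMem]
    · simp [h]

def countExcess (a : α) (d : ℝ) (w : List α) : ℝ := w.count a - d * w.length

lemma countExcess_append (a : α) (d : ℝ) (u v : List α) :
    countExcess a d (u ++ v) = countExcess a d u + countExcess a d v := by
  simp only [countExcess, List.count_append, List.length_append]
  push_cast
  ring

lemma abs_countExcess_le (a : α) (d : ℝ) (w : List α) :
    |countExcess a d w| ≤ (1 + |d|) * w.length := by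
  have hcount : (w.count a : ℝ) ≤ w.length := by exact_mod_cast List.count_le_length
  calc |countExcess a d w| ≤ |(w.count a : ℝ)| + |d * w.length| := abs_sub _ _
    _ = (w.count a : ℝ) + |d| * w.length := by simp [abs_mul]
    _ ≤ (1 + |d|) * w.length := by linarith

lemma countExcess_eq_neg_half {a j : α} {w : List α} (d : ℝ)
    (h : 2 * w.count j + w.count a = w.length) :
    countExcess j ((1 - d) / 2) w = -countExcess a d w / 2 := by
  have h' : 2 * (w.count j : ℝ) + w.count a = w.length := by exact_mod_cast h
  simp only [countExcess]
  linarith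

lemma two_mul_count_add_count_blockPrefix {b : ℕ → List α} {a j : α}
    (h : ∀ k, 2 * (b k).count j + (b k).count a = (b k).length) (k : ℕ) :
    2 * (blockPrefix b k).count j + (blockPrefix b k).count a = (blockPrefix b k).length := by
  induction k with
  | zero => simp [blockPrefix]
  | succ k ih =>
    have := h k
    simp only [blockPrefix_succ, List.count_append, List.length_append]
    omega

lemma abs_countExcess_take_blockPrefix_le {b : ℕ → List α} {a : α} {δ C : ℝ} {L : ℕ}
    (hL : ∀ k, (b k).length ≤ L) (hC : ∀ k, |countExcess a δ (blockPrefix b k)| ≤ C) (k : ℕ)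
    {N : ℕ} (hN : N ≤ (blockPrefix b k).length) :
    |countExcess a δ ((blockPrefix b k).take N)| ≤ C + (1 + |δ|) * L := by
  have hslack : 0 ≤ (1 + |δ|) * L := by positivity
  induction k generalizing N with
  | zero =>
    have : (blockPrefix b 0).take N = blockPrefix b 0 := by simp [blockPrefix]
    rw [this]
    linarith [hC 0]
  | succ k ih =>
    rw [blockPrefix_succ, List.take_append]
    rcases le_or_gt N (blockPrefix b k).length with hle | hgt
    · rw [Nat.sub_eq_zero_of_le hle, List.take_zero, List.append_nil]
      exact ih hle
    · rw [List.take_of_length_le hgt.le, countExcess_append]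
      have hpart : ((b k).take (N - (blockPrefix b k).length)).length ≤ L :=
        (List.length_take_le' _ _).trans (hL k)
      calc _ ≤ |countExcess a δ (blockPrefix b k)|
            + |countExcess a δ ((b k).take (N - (blockPrefix b k).length))| := abs_add_le _ _
        _ ≤ C + (1 + |δ|) * L := by
          gcongr
          · exact hC k
          · exact (abs_countExcess_le a δ _).trans (by gcongr)

end Blocks

lemma tendsto_div_of_abs_sub_mul_le {f : ℕ → ℝ} {c C : ℝ} (h : ∀ N, |f N - c * N| ≤ C) :
    Tendsto (fun N : ℕ => f N / N) atTop (𝓝 c) := by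
  have hzero : Tendsto (fun N : ℕ => f N / N - c) atTop (𝓝 0) := by
    refine squeeze_zero_norm' ?_ (tendsto_const_div_atTop_nhds_zero_nat C)
    filter_upwards [eventually_gt_atTop 0] with N hN
    have hN' : (0 : ℝ) < N := by exact_mod_cast hN
    rw [Real.norm_eq_abs, div_sub' hN'.ne', abs_div, abs_of_pos hN', mul_comm]
    gcongr
    exact h N
  simpa using hzero.add_const c

lemma concatOf_eq_getD_blockPrefix {b : ℕ → List ℤ} (hb : ∀ k, b k ≠ []) {i N : ℕ}
    (hi : i < N) : concatOf b i = (blockPrefix b N).getD i 0 := by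
  have hlt : i < (blockPrefix b (i + 1)).length := le_length_blockPrefix hb (i + 1)
  have hpre := blockPrefix_isPrefix b (Nat.succ_le_of_lt hi)
  rw [concatOf, ← blockPrefix, List.getD_eq_getElem _ _ hlt,
    List.getD_eq_getElem _ _ (hlt.trans_le hpre.length_le), hpre.getElem]

theorem tendsto_density_concatOf {b : ℕ → List ℤ} {j : ℤ} {δ C : ℝ} {L : ℕ}
    (hb : ∀ k, b k ≠ []) (hL : ∀ k, (b k).length ≤ L)
    (hC : ∀ k, |countExcess j δ (blockPrefix b k)| ≤ C) :
    Tendsto (fun N : ℕ => (((Finset.range N).filter (fun i => concatOf b i = j)).card : ℝ) / N)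
      atTop (𝓝 δ) := by
  refine tendsto_div_of_abs_sub_mul_le (C := C + (1 + |δ|) * L) fun N => ?_
  have hN := le_length_blockPrefix hb N
  have hcard : (Finset.range N).filter (fun i => concatOf b i = j)
      = (Finset.range N).filter (fun i => (blockPrefix b N).getD i 0 = j) :=
    Finset.filter_congr fun i hi => by rw [concatOf_eq_getD_blockPrefix hb (Finset.mem_range.mp hi)]
  have := abs_countExcess_take_blockPrefix_le hL hC N hN
  rwa [countExcess, List.length_take, min_eq_left hN, ← card_filter_getD_eq_count_take _ 0 j hN,
    ← hcard] at this

section Greedy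

variable {α : Type*} (f : List α → ℝ) (u v : List α)

noncomputable def greedyPrefix : ℕ → List α
  | 0 => []
  | k + 1 => greedyPrefix k ++ if f (greedyPrefix k) ≤ 0 then v else u

noncomputable def greedyBlocks (k : ℕ) : List α :=
  if f (greedyPrefix f u v k) ≤ 0 then v else u

lemma greedyBlocks_eq_or (k : ℕ) : greedyBlocks f u v k = u ∨ greedyBlocks f u v k = v := by
  unfold greedyBlocks
  split_ifs
  exacts [Or.inr rfl, Or.inl rfl]

lemma blockPrefix_greedyBlocks (k : ℕ) :
    blockPrefix (greedyBlocks f u v) k = greedyPrefix f u v k := by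
  induction k with
  | zero => rfl
  | succ k ih => rw [blockPrefix_succ, ih]; rfl

lemma greedyPrefix_mem_Icc (hf : ∀ p w, f (p ++ w) = f p + f w) (hu : f u ≤ 0) (hv : 0 ≤ f v)
    (k : ℕ) : f (greedyPrefix f u v k) ∈ Set.Icc (f u) (f v) := by
  induction k with
  | zero =>
    have hnil : f [] = 0 := by
      have h := hf [] []
      rw [List.nil_append] at h
      linarith
    exact ⟨by simp [greedyPrefix, hnil, hu], by simp [greedyPrefix, hnil, hv]⟩
  | succ k ih =>
    obtain ⟨hlo, hhi⟩ := ih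
    simp only [greedyPrefix]
    split_ifs with h <;> rw [hf] <;> constructor <;> linarith

end Greedy

section ThueMorse

variable {τ : ℕ → ℕ}

lemma tau_le_one (hτ0 : τ 0 = 0) (hτe : ∀ i, τ (2 * i) = τ i)
    (hτo : ∀ i, τ (2 * i + 1) = 1 - τ i) (i : ℕ) : τ i ≤ 1 := by
  induction i using Nat.strong_induction_on with
  | _ i ih =>
    obtain ⟨j, rfl | rfl⟩ := Nat.even_or_odd' i
    · rcases j.eq_zero_or_pos with rfl | hj
      · simp [hτ0]
      · rw [hτe]
        exact ih j (by omega)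
    · rw [hτo]
      omega

lemma abs_lam_sub_le_one {μ : ℤ} {lam : ℕ → ℤ} (hτ0 : τ 0 = 0) (hτe : ∀ i, τ (2 * i) = τ i)
    (hτo : ∀ i, τ (2 * i + 1) = 1 - τ i)
    (hlam : ∀ i, 1 ≤ i → lam i = μ + (τ i : ℤ) - (τ (i - 1) : ℤ)) :
    ∀ i, 1 ≤ i → |lam i - μ| ≤ 1 := by
  intro i hi
  have h₁ := tau_le_one hτ0 hτe hτo i
  have h₂ := tau_le_one hτ0 hτe hτo (i - 1)
  rw [hlam i hi, abs_le]
  omega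

end ThueMorse

section Words

variable (μ : ℤ)

lemma count_reflectZ (x : ℤ) (w : List ℤ) : (reflectZ μ w).count x = w.count (2 * μ - x) := by
  have hinj : Function.Injective (fun c : ℤ => 2 * μ - c) := fun a b h => by simpa using h
  simpa [reflectZ] using List.count_map_of_injective w _ hinj (2 * μ - x)

lemma abs_sub_le_one_of_mem_reflectZ {w : List ℤ} (hw : ∀ x ∈ w, |x - μ| ≤ 1) :
    ∀ x ∈ reflectZ μ w, |x - μ| ≤ 1 := by
  simp only [reflectZ, List.mem_map]
  rintro _ ⟨c, hc, rfl⟩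
  rw [show 2 * μ - c - μ = -(c - μ) by ring, abs_neg]
  exact hw c hc

lemma count_sub_one_add_count_add_count_add_one {w : List ℤ} (hw : ∀ x ∈ w, |x - μ| ≤ 1) :
    w.count (μ - 1) + w.count μ + w.count (μ + 1) = w.length := by
  induction w with
  | nil => simp
  | cons x w ih =>
    have hx := abs_le.mp (hw x List.mem_cons_self)
    have := ih fun y hy => hw y (List.mem_cons_of_mem _ hy)
    simp only [List.count_cons, List.length_cons, beq_iff_eq]
    split_ifs <;> omega

variable (lam : ℕ → ℤ) (n : ℕ)

lemma length_wordA : (wordA μ lam n).length = 2 ^ n := by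
  simp only [wordA, List.length_cons, List.length_map, List.length_range]
  have := Nat.one_le_two_pow (n := n)
  omega

lemma length_wordB : (wordB μ lam n).length = 2 ^ n := by
  simp only [wordB, List.length_cons, List.length_map, List.length_range]
  have := Nat.one_le_two_pow (n := n)
  omega

lemma count_wordA : (wordA μ lam n).count μ = (wordB μ lam n).count μ + 1 := by
  simp [wordA, wordB]

lemma wordW1_ne_nil : wordW1 μ lam n ≠ [] := by simp [wordW1, wordB]

lemma wordW2_ne_nil : wordW2 μ lam n ≠ [] := by simp [wordW2, wordA]

lemma length_wordW1 : (wordW1 μ lam n).length = 2 * (wordW2 μ lam n).length := by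
  simp only [wordW1, wordW2, reflectZ, List.length_append, List.length_map, length_wordA,
    length_wordB]
  ring

lemma count_wordW1_add_two : (wordW1 μ lam n).count μ + 2 = 2 * (wordW2 μ lam n).count μ := by
  simp only [wordW1, wordW2, List.count_append, count_reflectZ, two_mul, add_sub_cancel_right,
    count_wordA]
  ring

lemma d2star_wordW1_lt_d2star_wordW2 :
    d2star μ (wordW1 μ lam n) < d2star μ (wordW2 μ lam n) := by
  have hlen : (0 : ℝ) < (wordW2 μ lam n).length := by
    exact_mod_cast List.length_pos_iff.mpr (wordW2_ne_nil μ lam n)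
  have hcount : ((wordW1 μ lam n).count μ : ℝ) + 2 = 2 * (wordW2 μ lam n).count μ := by
    exact_mod_cast count_wordW1_add_two μ lam n
  rw [d2star, d2star, length_wordW1, Nat.cast_mul, Nat.cast_two,
    div_lt_div_iff₀ (by positivity) hlen]
  nlinarith

lemma count_sub_one_eq_count_add_one_of_wordW {w : List ℤ}
    (hw : w = wordW1 μ lam n ∨ w = wordW2 μ lam n) : w.count (μ - 1) = w.count (μ + 1) := by
  have h₁ : 2 * μ - (μ - 1) = μ + 1 := by ring
  have h₂ : 2 * μ - (μ + 1) = μ - 1 := by ring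
  rcases hw with rfl | rfl <;>
    simp only [wordW1, wordW2, List.count_append, count_reflectZ, h₁, h₂] <;> omega

variable {μ lam n}

lemma abs_sub_le_one_of_mem_wordW (hlam : ∀ i, 1 ≤ i → |lam i - μ| ≤ 1) {w : List ℤ}
    (hw : w = wordW1 μ lam n ∨ w = wordW2 μ lam n) : ∀ x ∈ w, |x - μ| ≤ 1 := by
  have htail : ∀ x ∈ (List.range (2 ^ n - 1)).map (fun i => lam (i + 1)), |x - μ| ≤ 1 := by
    simp only [List.mem_map]
    rintro _ ⟨i, -, rfl⟩
    exact hlam (i + 1) (Nat.le_add_left 1 i)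
  have hA : ∀ x ∈ wordA μ lam n, |x - μ| ≤ 1 := by
    simpa [wordA] using htail
  have hB : ∀ x ∈ wordB μ lam n, |x - μ| ≤ 1 := by
    simpa [wordB] using htail
  have hA' := abs_sub_le_one_of_mem_reflectZ μ hA
  have hB' := abs_sub_le_one_of_mem_reflectZ μ hB
  rcases hw with rfl | rfl <;> simp only [wordW1, wordW2, List.mem_append] <;> grind

lemma two_mul_count_add_count_of_wordW (hlam : ∀ i, 1 ≤ i → |lam i - μ| ≤ 1) {w : List ℤ}
    (hw : w = wordW1 μ lam n ∨ w = wordW2 μ lam n) {j : ℤ} (hj : j = μ - 1 ∨ j = μ + 1) :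
    2 * w.count j + w.count μ = w.length := by
  have := count_sub_one_add_count_add_count_add_one μ (abs_sub_le_one_of_mem_wordW hlam hw)
  have := count_sub_one_eq_count_add_one_of_wordW μ lam n hw
  rcases hj with rfl | rfl <;> omega

end Words

lemma countExcess_nonpos_of_d2star_le {a : ℤ} {d : ℝ} {w : List ℤ} (hw : w ≠ [])
    (h : d2star a w ≤ d) : countExcess a d w ≤ 0 := by
  have hlen : (0 : ℝ) < w.length := by exact_mod_cast List.length_pos_iff.mpr hw
  rw [d2star, div_le_iff₀ hlen] at h
  rw [countExcess]
  linarith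

lemma countExcess_nonneg_of_le_d2star {a : ℤ} {d : ℝ} {w : List ℤ} (hw : w ≠ [])
    (h : d ≤ d2star a w) : 0 ≤ countExcess a d w := by
  have hlen : (0 : ℝ) < w.length := by exact_mod_cast List.length_pos_iff.mpr hw
  rw [d2star, le_div_iff₀ hlen] at h
  rw [countExcess]
  linarith

theorem stmt19_general (μ : ℤ) (τ : ℕ → ℕ) (hτ0 : τ 0 = 0)
    (hτe : ∀ i, τ (2 * i) = τ i) (hτo : ∀ i, τ (2 * i + 1) = 1 - τ i)
    (lam : ℕ → ℤ) (hlam : ∀ i, 1 ≤ i → lam i = μ + (τ i : ℤ) - (τ (i - 1) : ℤ))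
    (n : ℕ) :
    d2star μ (wordW1 μ lam n) < d2star μ (wordW2 μ lam n) ∧
    ∀ d : ℝ, d ∈ Set.Icc (d2star μ (wordW1 μ lam n)) (d2star μ (wordW2 μ lam n)) →
      ∃ b : ℕ → List ℤ, (∀ k, b k = wordW1 μ lam n ∨ b k = wordW2 μ lam n) ∧
        (∀ j : ℤ, j ∈ ({μ - 1, μ, μ + 1} : Set ℤ) →
          ∃ dj : ℝ, Filter.Tendsto
            (fun N : ℕ =>
              (((Finset.range N).filter (fun i => concatOf b i = j)).card : ℝ) / N)
            Filter.atTop (nhds dj)) ∧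
        Filter.Tendsto
          (fun N : ℕ =>
            (((Finset.range N).filter (fun i => concatOf b i = μ)).card : ℝ) / N)
          Filter.atTop (nhds d) := by
  refine ⟨d2star_wordW1_lt_d2star_wordW2 μ lam n, fun d ⟨hd₁, hd₂⟩ => ?_⟩
  have hu := countExcess_nonpos_of_d2star_le (wordW1_ne_nil μ lam n) hd₁
  have hv := countExcess_nonneg_of_le_d2star (wordW2_ne_nil μ lam n) hd₂
  let b := greedyBlocks (countExcess μ d) (wordW1 μ lam n) (wordW2 μ lam n)
  have hb : ∀ k, b k = wordW1 μ lam n ∨ b k = wordW2 μ lam n := greedyBlocks_eq_or _ _ _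
  have hne : ∀ k, b k ≠ [] := fun k => by
    rcases hb k with h | h <;> rw [h]
    exacts [wordW1_ne_nil μ lam n, wordW2_ne_nil μ lam n]
  have hL : ∀ k, (b k).length ≤ (wordW1 μ lam n).length + (wordW2 μ lam n).length := fun k => by
    rcases hb k with h | h <;> rw [h] <;> omega
  set C := countExcess μ d (wordW2 μ lam n) - countExcess μ d (wordW1 μ lam n)
  have hexcess : ∀ k, |countExcess μ d (blockPrefix b k)| ≤ C := fun k => by
    obtain ⟨hlo, hhi⟩ := greedyPrefix_mem_Icc _ _ _ (countExcess_append μ d) hu hv k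
    rw [blockPrefix_greedyBlocks, abs_le]
    constructor <;> linarith
  have hμ := tendsto_density_concatOf hne hL hexcess
  have hside : ∀ j, j = μ - 1 ∨ j = μ + 1 → Tendsto
      (fun N : ℕ => (((Finset.range N).filter (fun i => concatOf b i = j)).card : ℝ) / N)
      atTop (𝓝 ((1 - d) / 2)) := fun j hj =>
    tendsto_density_concatOf (C := C) hne hL fun k => by
      have hbal := two_mul_count_add_count_blockPrefix (fun k =>
        two_mul_count_add_count_of_wordW (abs_lam_sub_le_one hτ0 hτe hτo hlam) (hb k) hj) k
      rw [countExcess_eq_neg_half d hbal, abs_div, abs_neg, abs_two]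
      linarith [hexcess k, abs_nonneg (countExcess μ d (blockPrefix b k))]
  refine ⟨b, hb, ?_, hμ⟩
  rintro j (rfl | rfl | rfl)
  exacts [⟨_, hside _ (Or.inl rfl)⟩, ⟨d, hμ⟩, ⟨_, hside _ (Or.inr rfl)⟩]

theorem stmt19 (m1 m2 : ℕ) (hm2 : 1 ≤ m2) (hm : m2 ≤ m1) (heven : (m1 + m2) % 2 = 0)
    (μ : ℤ) (hμ : 2 * μ = (m1 : ℤ) - (m2 : ℤ))
    (τ : ℕ → ℕ) (hτ0 : τ 0 = 0)
    (hτe : ∀ i, τ (2 * i) = τ i) (hτo : ∀ i, τ (2 * i + 1) = 1 - τ i)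
    (lam : ℕ → ℤ) (hlam : ∀ i, 1 ≤ i → lam i = μ + (τ i : ℤ) - (τ (i - 1) : ℤ))
    (n : ℕ) (hn : 1 ≤ n) :
    d2star μ (wordW1 μ lam n) < d2star μ (wordW2 μ lam n) ∧
    ∀ d : ℝ, d ∈ Set.Icc (d2star μ (wordW1 μ lam n)) (d2star μ (wordW2 μ lam n)) →
      ∃ b : ℕ → List ℤ, (∀ k, b k = wordW1 μ lam n ∨ b k = wordW2 μ lam n) ∧
        (∀ j : ℤ, j ∈ ({μ - 1, μ, μ + 1} : Set ℤ) →
          ∃ dj : ℝ, Filter.Tendsto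
            (fun N : ℕ =>
              (((Finset.range N).filter (fun i => concatOf b i = j)).card : ℝ) / N)
            Filter.atTop (nhds dj)) ∧
        Filter.Tendsto
          (fun N : ℕ =>
            (((Finset.range N).filter (fun i => concatOf b i = μ)).card : ℝ) / N)
          Filter.atTop (nhds d) :=
  stmt19_general μ τ hτ0 hτe hτo lam hlam n
end
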